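/- arXiv:2507.11478 — 6 statements merged into one kernel-verified Lean document; each statement's English description precedes it below -/
import Mathlib

section
/- Let A be a commutative ring, let R = A[x₁,x₂] be the polynomial ring in two variables over A, and let μ : R → R be the A-algebra automorphism exchanging x₁ and x₂. Then for every three elements a, p₁, p₂ ∈ R, the element a·p₁ + μ(a)·p₂ belongs to the ideal of R generated by the two elements p₁ + p₂ and x₁·p₁ + x₂·p₂. -/
open MvPolynomial

lemma swap_dvd (A : Type*) [CommRing A] (a : MvPolynomial (Fin 2) A) :
    (X 0 - X 1 : MvPolynomial (Fin 2) A) ∣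
      a - rename (Equiv.swap (0 : Fin 2) 1) a := by
  induction a using MvPolynomial.induction_on with
  | C c => simp
  | add f g hf hg =>
      have : f + g - rename (Equiv.swap (0 : Fin 2) 1) (f + g)
          = (f - rename (Equiv.swap (0 : Fin 2) 1) f)
            + (g - rename (Equiv.swap (0 : Fin 2) 1) g) := by
        simp [map_add]; ring
      rw [this]; exact dvd_add hf hg
  | mul_X f i hf =>
      have key : f * X i - rename (Equiv.swap (0 : Fin 2) 1) (f * X i)
          = X i * (f - rename (Equiv.swap (0 : Fin 2) 1) f)
            + rename (Equiv.swap (0 : Fin 2) 1) f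
              * (X i - X (Equiv.swap (0 : Fin 2) 1 i)) := by
        simp [map_mul]; ring
      rw [key]
      refine dvd_add (Dvd.dvd.mul_left hf _) (Dvd.dvd.mul_left ?_ _)
      fin_cases i
      · exact ⟨1, by simp⟩
      · exact ⟨-1, by simp⟩

/-- Let `A` be a commutative ring, `R = A[x₁,x₂]` and `μ : R → R` the `A`-algebra
automorphism exchanging the two variables.  For every `a, p₁, p₂ ∈ R`, the element
`a·p₁ + μ(a)·p₂` lies in the ideal generated by `p₁ + p₂` and `x₁·p₁ + x₂·p₂`. -/
theorem stmt_0 (A : Type*) [CommRing A] (a p₁ p₂ : MvPolynomial (Fin 2) A) :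
    a * p₁ + (renameEquiv A (Equiv.swap (0 : Fin 2) 1)) a * p₂ ∈
      Ideal.span ({p₁ + p₂, X 0 * p₁ + X 1 * p₂} : Set (MvPolynomial (Fin 2) A)) := by
  obtain ⟨c, hc⟩ := swap_dvd A a
  set μa := rename (Equiv.swap (0 : Fin 2) 1) a with hμ
  have h1 : (p₁ + p₂ : MvPolynomial (Fin 2) A) ∈
      Ideal.span ({p₁ + p₂, X 0 * p₁ + X 1 * p₂} : Set (MvPolynomial (Fin 2) A)) :=
    Ideal.subset_span (Set.mem_insert _ _)
  have h2 : (X 0 * p₁ + X 1 * p₂ : MvPolynomial (Fin 2) A) ∈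
      Ideal.span ({p₁ + p₂, X 0 * p₁ + X 1 * p₂} : Set (MvPolynomial (Fin 2) A)) :=
    Ideal.subset_span (Set.mem_insert_of_mem _ rfl)
  have key : a * p₁ + (renameEquiv A (Equiv.swap (0 : Fin 2) 1)) a * p₂
      = (μa - c * X 1) * (p₁ + p₂) + c * (X 0 * p₁ + X 1 * p₂) := by
    have : a = μa + c * (X 0 - X 1) := by rw [hμ]; linear_combination hc
    rw [show ((renameEquiv A (Equiv.swap (0 : Fin 2) 1)) a : MvPolynomial (Fin 2) A) = μa
      from rfl, this]
    ring
  rw [key]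
  exact Ideal.add_mem _ (Ideal.mul_mem_left _ _ h1) (Ideal.mul_mem_left _ _ h2)
end

section
/- Let A be a commutative ring, let R = A[x₁,x₂] be the polynomial ring in two variables over A, and let μ : R → R be the A-algebra automorphism exchanging x₁ and x₂. Let d ≥ 1, let p₁ ∈ R be a polynomial involving only the variable x₁ which is monic of degree d as a polynomial in x₁, and set p₂ = μ(p₁). If a₁, a₂ ∈ R both have total degree strictly less than d and the element a₁·p₁ + a₂·p₂ is fixed by μ, then μ(a₁) = a₂ and μ(a₂) = a₁. -/
open MvPolynomial

lemma aux_aeval_X_map (A : Type*) [CommRing A] (S : Type*) [CommRing S] [Algebra A S]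
    (q : Polynomial A) :
    Polynomial.aeval (Polynomial.X : Polynomial S) q = q.map (algebraMap A S) := by
  rw [Polynomial.aeval_def, Polynomial.eval₂_eq_eval_map]
  have h : algebraMap A (Polynomial S) = Polynomial.C.comp (algebraMap A S) := rfl
  rw [h, ← Polynomial.map_map, Polynomial.eval_map, Polynomial.eval₂_C_X]

lemma aux_totalDegree_neg (A : Type*) [CommRing A] (n : ℕ) (p : MvPolynomial (Fin n) A) :
    (-p).totalDegree = p.totalDegree := by
  simp [totalDegree, support_neg]

/-- Let `A` be a commutative ring, `R = A[x₁,x₂]` and `μ` the `A`-algebra automorphism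
exchanging `x₁` and `x₂`.  Let `d ≥ 1`, let `p₁` be a polynomial involving only the
variable `x₁` which is monic of degree `d` in `x₁` (i.e. the image under `x ↦ x₁` of a
monic univariate polynomial `q` of degree `d`), and `p₂ = μ(p₁)`.  If `a₁, a₂` have total
degree `< d` and `a₁·p₁ + a₂·p₂` is fixed by `μ`, then `μ(a₁) = a₂` and `μ(a₂) = a₁`. -/
theorem stmt_1 (A : Type*) [CommRing A] (d : ℕ) (hd : 1 ≤ d)
    (q : Polynomial A) (hq : q.Monic) (hqd : q.natDegree = d)
    (p₁ p₂ : MvPolynomial (Fin 2) A)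
    (hp₁ : p₁ = Polynomial.aeval (X (0 : Fin 2)) q)
    (hp₂ : p₂ = (renameEquiv A (Equiv.swap (0 : Fin 2) 1)) p₁)
    (a₁ a₂ : MvPolynomial (Fin 2) A)
    (ha₁ : a₁.totalDegree < d) (ha₂ : a₂.totalDegree < d)
    (hfix : (renameEquiv A (Equiv.swap (0 : Fin 2) 1)) (a₁ * p₁ + a₂ * p₂)
      = a₁ * p₁ + a₂ * p₂) :
    (renameEquiv A (Equiv.swap (0 : Fin 2) 1)) a₁ = a₂ ∧
      (renameEquiv A (Equiv.swap (0 : Fin 2) 1)) a₂ = a₁ := by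
  rcases subsingleton_or_nontrivial A with hA | hA
  · exact ⟨Subsingleton.elim _ _, Subsingleton.elim _ _⟩
  set σ := renameEquiv A (Equiv.swap (0 : Fin 2) 1) with hσdef
  -- σ is an involution
  have hσsymm : σ.symm = σ := by
    rw [hσdef, renameEquiv_symm, Equiv.symm_swap]
  have hσσ : ∀ p : MvPolynomial (Fin 2) A, σ (σ p) = p := by
    intro p
    conv_lhs => rw [← hσsymm]
    exact σ.symm_apply_apply p
  -- σ preserves total degree
  have hσdeg : ∀ p : MvPolynomial (Fin 2) A, (σ p).totalDegree = p.totalDegree := by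
    intro p
    apply le_antisymm
    · exact totalDegree_rename_le _ p
    · conv_lhs => rw [← hσσ p]
      exact totalDegree_rename_le _ (σ p)
  have hσp₂ : σ p₂ = p₁ := by rw [hp₂, hσσ]
  -- the key equation
  set b := σ a₂ - a₁ with hb
  set c := a₂ - σ a₁ with hc
  have hσb : σ b = c := by
    rw [hb, map_sub, hσσ, hc]
  have key : b * p₁ = c * p₂ := by
    rw [map_add, map_mul, map_mul, ← hp₂, hσp₂] at hfix
    rw [hb, hc]
    linear_combination hfix
  -- degree bounds
  have hbd : b.totalDegree < d := by
    have h1 : b.totalDegree ≤ max (σ a₂).totalDegree (-a₁).totalDegree := by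
      rw [hb, sub_eq_add_neg]; exact totalDegree_add _ _
    rw [hσdeg, aux_totalDegree_neg] at h1
    exact lt_of_le_of_lt h1 (max_lt ha₂ ha₁)
  have hcd : c.totalDegree < d := by
    rw [← hσb, hσdeg]; exact hbd
  -- pass to polynomials in x₀ over A[x₁]
  set F := finSuccEquiv A 1 with hF
  have hFp₁ : F p₁ = q.map (algebraMap A (MvPolynomial (Fin 1) A)) := by
    rw [hp₁, ← Polynomial.aeval_algHom_apply F (X (0 : Fin 2)) q]
    have : F (X (0 : Fin 2)) = Polynomial.X := finSuccEquiv_X_zero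
    rw [this, aux_aeval_X_map]
  have hFp₁monic : (F p₁).Monic := by rw [hFp₁]; exact hq.map _
  have hFp₁deg : (F p₁).natDegree = d := by
    rw [hFp₁, hq.natDegree_map, hqd]
  -- p₂ maps to a constant
  have hσp₁ : σ p₁ = Polynomial.aeval (X (1 : Fin 2)) q := by
    have hx : σ (X (0 : Fin 2)) = X 1 := by
      rw [hσdef]
      show rename _ (X 0) = X 1
      rw [rename_X, Equiv.swap_apply_left]
    rw [hp₁, ← Polynomial.aeval_algHom_apply σ (X (0 : Fin 2)) q, hx]
  have hFp₂ : F p₂ = Polynomial.C (Polynomial.aeval (X (0 : Fin 1)) q) := by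
    rw [hp₂, hσp₁, ← Polynomial.aeval_algHom_apply F (X (1 : Fin 2)) q]
    have h1 : F (X (1 : Fin 2)) = Polynomial.C (X 0) := by
      have : (1 : Fin 2) = Fin.succ 0 := rfl
      rw [this]; exact finSuccEquiv_X_succ
    rw [h1]
    exact Polynomial.aeval_algHom_apply (Polynomial.CAlgHom (R := A)) (X (0 : Fin 1)) q
  have hFp₂deg : (F p₂).natDegree = 0 := by rw [hFp₂]; exact Polynomial.natDegree_C _
  -- show b = 0
  have hb0 : b = 0 := by
    by_contra hne
    have hFb : F b ≠ 0 := by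
      simpa using hne
    have heq : F b * F p₁ = F c * F p₂ := by
      have h := congrArg F key
      simpa only [map_mul] using h
    have hlhs : (F b * F p₁).natDegree = (F p₁).natDegree + (F b).natDegree := by
      rw [mul_comm]; exact hFp₁monic.natDegree_mul' hFb
    have hrhs : (F c * F p₂).natDegree < d := by
      calc (F c * F p₂).natDegree ≤ (F c).natDegree + (F p₂).natDegree :=
            Polynomial.natDegree_mul_le
        _ = (F c).natDegree := by rw [hFp₂deg, add_zero]
        _ = c.degreeOf 0 := natDegree_finSuccEquiv c
        _ ≤ c.totalDegree := degreeOf_le_totalDegree c 0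
        _ < d := hcd
    rw [← heq, hlhs, hFp₁deg] at hrhs
    omega
  have hc0 : c = 0 := by rw [← hσb, hb0, map_zero]
  constructor
  · exact (sub_eq_zero.mp hc0).symm
  · exact sub_eq_zero.mp hb0
end

section
/- Let A be a commutative ring, let R = A[x₁,x₂] be the polynomial ring in two variables over A, and let μ : R → R be the A-algebra automorphism exchanging x₁ and x₂. Let d ≥ 1, let p₁ ∈ R be a polynomial involving only the variable x₁ which is monic of degree d as a polynomial in x₁, and set p₂ = μ(p₁). Suppose y ∈ R is fixed by μ and y = a₁·p₁ + a₂·p₂ for some a₁, a₂ ∈ R both of total degree strictly less than d. Then y belongs to the ideal of R generated by p₁ + p₂ and x₁·p₁ + x₂·p₂. -/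
/-!
Applying `μ` to `y = a₁ p₁ + a₂ p₂` gives `(a₁ - μ a₂) p₁ = (μ a₁ - a₂) p₂`. As a polynomial in
`x₁`, `p₁` is monic of degree `d` while `p₂` is constant, so the right side has `x₁`-degree `< d`
and any nonzero multiple of `p₁` has `x₁`-degree `≥ d`; hence `a₂ = μ a₁`. Then
`y = a₁ p₁ + μ(a₁) p₂` lies in the ideal because `A[x₁,x₂] = S + S x₁` over the invariants `S`
of `μ` (`x₁² = (x₁ + x₂) x₁ - x₁ x₂`), and `s + t x₁` contributes `s (p₁ + p₂) + t (x₁ p₁ + x₂ p₂)`.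
-/

open MvPolynomial

namespace MvPolynomial

variable {A : Type*} [CommRing A]

theorem exists_rename_swap_invariant_eq_add_mul_X_zero (g : MvPolynomial (Fin 2) A) :
    ∃ s t : MvPolynomial (Fin 2) A, rename (Equiv.swap 0 1) s = s ∧
      rename (Equiv.swap 0 1) t = t ∧ g = s + t * X 0 := by
  induction g using MvPolynomial.induction_on with
  | C a => exact ⟨C a, 0, rename_C _ _, map_zero _, by rw [zero_mul, add_zero]⟩
  | add f g hf hg =>
    obtain ⟨s, t, hs, ht, rfl⟩ := hf
    obtain ⟨s', t', hs', ht', rfl⟩ := hg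
    exact ⟨s + s', t + t', by rw [map_add, hs, hs'], by rw [map_add, ht, ht'], by ring⟩
  | mul_X g i hg =>
    obtain ⟨s, t, hs, ht, rfl⟩ := hg
    have he₁ : rename (Equiv.swap 0 1) (X 0 + X 1 : MvPolynomial (Fin 2) A) = X 0 + X 1 := by
      simp only [map_add, rename_X, Equiv.swap_apply_left, Equiv.swap_apply_right, add_comm]
    have he₂ : rename (Equiv.swap 0 1) (X 0 * X 1 : MvPolynomial (Fin 2) A) = X 0 * X 1 := by
      simp only [map_mul, rename_X, Equiv.swap_apply_left, Equiv.swap_apply_right, mul_comm]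
    match i with
    | 0 =>
      refine ⟨-(X 0 * X 1) * t, s + (X 0 + X 1) * t, ?_, ?_, by ring⟩ <;>
        simp only [map_add, map_mul, map_neg, hs, ht, he₁, he₂]
    | 1 =>
      refine ⟨X 0 * X 1 * t + (X 0 + X 1) * s, -s, ?_, ?_, by ring⟩ <;>
        simp only [map_add, map_mul, map_neg, hs, ht, he₁, he₂]

theorem mul_add_rename_swap_mul_mem_span (p₁ p₂ g : MvPolynomial (Fin 2) A) :
    g * p₁ + rename (Equiv.swap 0 1) g * p₂ ∈
      Ideal.span ({p₁ + p₂, X 0 * p₁ + X 1 * p₂} : Set (MvPolynomial (Fin 2) A)) := by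
  obtain ⟨s, t, hs, ht, rfl⟩ := exists_rename_swap_invariant_eq_add_mul_X_zero g
  refine Ideal.mem_span_pair.2 ⟨s, t, ?_⟩
  simp only [map_add, map_mul, hs, ht, rename_X, Equiv.swap_apply_left]
  ring

theorem degreeOf_zero_mul_aeval_X_zero {n : ℕ} {q : Polynomial A} (hq : q.Monic)
    {b : MvPolynomial (Fin (n + 1)) A} (hb : b ≠ 0) :
    degreeOf 0 (b * Polynomial.aeval (X 0) q) = degreeOf 0 b + q.natDegree := by
  obtain _ | _ := subsingleton_or_nontrivial A
  · exact absurd (Subsingleton.elim _ _) hb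
  have hq' : finSuccEquiv A n (Polynomial.aeval (X 0) q) = q.map (algebraMap A _) := by
    rw [← Polynomial.aeval_algHom_apply, finSuccEquiv_X_zero,
      ← Polynomial.aeval_map_algebraMap (MvPolynomial (Fin n) A), Polynomial.aeval_X_left_apply]
  rw [← natDegree_finSuccEquiv, map_mul, hq', mul_comm, (hq.map _).natDegree_mul',
    hq.natDegree_map, natDegree_finSuccEquiv, add_comm]
  exact (map_ne_zero_iff _ (finSuccEquiv A n).injective).2 hb

theorem degreeOf_zero_aeval_X_succ {n : ℕ} (q : Polynomial A) (j : Fin n) :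
    degreeOf 0 (Polynomial.aeval (X j.succ) q : MvPolynomial (Fin (n + 1)) A) = 0 := by
  rw [← natDegree_finSuccEquiv, ← Polynomial.aeval_algHom_apply, finSuccEquiv_X_succ,
    show Polynomial.aeval (Polynomial.C (X j)) q = Polynomial.C (Polynomial.aeval (X j) q) from
      Polynomial.aeval_algHom_apply Polynomial.CAlgHom _ q, Polynomial.natDegree_C]

theorem eq_zero_of_mul_aeval_X_zero_eq_mul_aeval_X_one {q : Polynomial A} (hq : q.Monic)
    {b c : MvPolynomial (Fin 2) A}
    (h : b * Polynomial.aeval (X 0) q = c * Polynomial.aeval (X 1) q)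
    (hc : degreeOf 0 c < q.natDegree) : b = 0 := by
  by_contra hb
  have hlt : degreeOf 0 (c * Polynomial.aeval (X 1) q) < q.natDegree :=
    calc _ ≤ degreeOf 0 c + degreeOf 0 (Polynomial.aeval (X (Fin.succ 0)) q) :=
          degreeOf_mul_le _ _ _
      _ < q.natDegree := by rwa [degreeOf_zero_aeval_X_succ, add_zero]
  rw [← h, degreeOf_zero_mul_aeval_X_zero hq hb] at hlt
  omega

end MvPolynomial

theorem stmt_2_general (A : Type*) [CommRing A] (d : ℕ)
    (q : Polynomial A) (hq : q.Monic) (hqd : q.natDegree = d)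
    (p₁ p₂ : MvPolynomial (Fin 2) A)
    (hp₁ : p₁ = Polynomial.aeval (X (0 : Fin 2)) q)
    (hp₂ : p₂ = (renameEquiv A (Equiv.swap (0 : Fin 2) 1)) p₁)
    (y a₁ a₂ : MvPolynomial (Fin 2) A)
    (hfix : (renameEquiv A (Equiv.swap (0 : Fin 2) 1)) y = y)
    (hy : y = a₁ * p₁ + a₂ * p₂)
    (ha₁ : a₁.totalDegree < d) (ha₂ : a₂.totalDegree < d) :
    y ∈ Ideal.span ({p₁ + p₂, X 0 * p₁ + X 1 * p₂} : Set (MvPolynomial (Fin 2) A)) := by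
  simp only [renameEquiv_apply] at hp₂ hfix
  set μ := rename (R := A) (Equiv.swap (0 : Fin 2) 1)
  have hμμ (r : MvPolynomial (Fin 2) A) : μ (μ r) = r := by
    rw [rename_rename, ← Equiv.Perm.coe_mul, Equiv.swap_mul_self, Equiv.Perm.coe_one,
      rename_id_apply]
  have hp₂' : p₂ = Polynomial.aeval (X 1) q := by
    rw [hp₂, hp₁, ← Polynomial.aeval_algHom_apply, rename_X, Equiv.swap_apply_left]
  have hμp₂ : μ p₂ = p₁ := by rw [hp₂, hμμ]
  have hsymm : (a₁ - μ a₂) * p₁ = (μ a₁ - a₂) * p₂ := by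
    have h := congrArg μ hy
    rw [hfix, map_add, map_mul, map_mul, ← hp₂, hμp₂, hy] at h
    linear_combination h
  have hdeg : degreeOf 0 (μ a₁ - a₂) < q.natDegree :=
    calc _ ≤ (μ a₁ - a₂).totalDegree := degreeOf_le_totalDegree _ _
      _ ≤ max (μ a₁).totalDegree a₂.totalDegree := totalDegree_sub _ _
      _ < q.natDegree := hqd ▸ max_lt ((totalDegree_rename_le _ _).trans_lt ha₁) ha₂
  rw [hp₁, hp₂'] at hsymm
  have ha : a₂ = μ a₁ := by
    rw [sub_eq_zero.1 (eq_zero_of_mul_aeval_X_zero_eq_mul_aeval_X_one hq hsymm hdeg), hμμ]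
  rw [hy, ha]
  exact mul_add_rename_swap_mul_mem_span p₁ p₂ a₁

/-- Let `A` be a commutative ring, `R = A[x₁,x₂]` and `μ` the `A`-algebra automorphism
exchanging `x₁` and `x₂`.  Let `d ≥ 1`, let `p₁` be a polynomial involving only the
variable `x₁` which is monic of degree `d` in `x₁` (i.e. the image under `x ↦ x₁` of a
monic univariate polynomial `q` of degree `d`), and `p₂ = μ(p₁)`.  If `y` is fixed by `μ`
and `y = a₁·p₁ + a₂·p₂` with `a₁, a₂` of total degree `< d`, then `y` belongs to the
ideal generated by `p₁ + p₂` and `x₁·p₁ + x₂·p₂`. -/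
theorem stmt_2 (A : Type*) [CommRing A] (d : ℕ) (hd : 1 ≤ d)
    (q : Polynomial A) (hq : q.Monic) (hqd : q.natDegree = d)
    (p₁ p₂ : MvPolynomial (Fin 2) A)
    (hp₁ : p₁ = Polynomial.aeval (X (0 : Fin 2)) q)
    (hp₂ : p₂ = (renameEquiv A (Equiv.swap (0 : Fin 2) 1)) p₁)
    (y a₁ a₂ : MvPolynomial (Fin 2) A)
    (hfix : (renameEquiv A (Equiv.swap (0 : Fin 2) 1)) y = y)
    (hy : y = a₁ * p₁ + a₂ * p₂)
    (ha₁ : a₁.totalDegree < d) (ha₂ : a₂.totalDegree < d) :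
    y ∈ Ideal.span ({p₁ + p₂, X 0 * p₁ + X 1 * p₂} : Set (MvPolynomial (Fin 2) A)) :=
  stmt_2_general A d q hq hqd p₁ p₂ hp₁ hp₂ y a₁ a₂ hfix hy ha₁ ha₂
end

section
/- Let A be a commutative ring and R = A[x₁,x₂] the polynomial ring in two variables over A. Let d, e ≥ 1, let p₁ ∈ R be a polynomial involving only the variable x₁ which is monic of degree d as a polynomial in x₁, and let p₂ ∈ R be a polynomial involving only the variable x₂ which is monic of degree e as a polynomial in x₂. If b₁, b₂ ∈ R satisfy b₁·p₁ + b₂·p₂ = 0 and the degree of b₂ in the variable x₁ is strictly less than d, then b₁ = 0 and b₂ = 0. -/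
open MvPolynomial

/-- Let `A` be a commutative ring and `R = A[x₁,x₂]`.  Let `d, e ≥ 1`, let `p₁` involve
only `x₁` and be monic of degree `d` in `x₁` (i.e. the image under `x ↦ x₁` of a monic
univariate polynomial of degree `d`), and let `p₂` involve only `x₂` and be monic of
degree `e` in `x₂`.  If `b₁·p₁ + b₂·p₂ = 0` and the degree of `b₂` in `x₁` is `< d`,
then `b₁ = 0` and `b₂ = 0`. -/
theorem stmt_3 (A : Type*) [CommRing A] (d e : ℕ) (hd : 1 ≤ d) (he : 1 ≤ e)
    (q₁ q₂ : Polynomial A) (hq₁ : q₁.Monic) (hq₁d : q₁.natDegree = d)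
    (hq₂ : q₂.Monic) (hq₂e : q₂.natDegree = e)
    (p₁ p₂ b₁ b₂ : MvPolynomial (Fin 2) A)
    (hp₁ : p₁ = Polynomial.aeval (X (0 : Fin 2)) q₁)
    (hp₂ : p₂ = Polynomial.aeval (X (1 : Fin 2)) q₂)
    (hsum : b₁ * p₁ + b₂ * p₂ = 0)
    (hdeg : MvPolynomial.degreeOf (0 : Fin 2) b₂ < d) :
    b₁ = 0 ∧ b₂ = 0 := by
  rcases subsingleton_or_nontrivial A with hA | hA
  · exact ⟨Subsingleton.elim _ _, Subsingleton.elim _ _⟩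
  subst hp₁ hp₂
  set F := MvPolynomial.finSuccEquiv A 1 with hF
  have hFp₁ : F (Polynomial.aeval (X (0 : Fin 2)) q₁)
      = q₁.map (algebraMap A (MvPolynomial (Fin 1) A)) := by
    rw [← Polynomial.aeval_algHom_apply F (X (0 : Fin 2)) q₁, hF,
      MvPolynomial.finSuccEquiv_X_zero]
    rfl
  have hmon₁ : (F (Polynomial.aeval (X (0 : Fin 2)) q₁)).Monic := by
    rw [hFp₁]; exact hq₁.map _
  have hdeg₁ : (F (Polynomial.aeval (X (0 : Fin 2)) q₁)).natDegree = d := by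
    rw [hFp₁, hq₁.natDegree_map, hq₁d]
  have h10 : (1 : Fin 2) = Fin.succ 0 := rfl
  have hFp₂ : F (Polynomial.aeval (X (1 : Fin 2)) q₂)
      = Polynomial.C (Polynomial.aeval (X (0 : Fin 1)) q₂) := by
    rw [← Polynomial.aeval_algHom_apply F (X (1 : Fin 2)) q₂, hF, h10,
      MvPolynomial.finSuccEquiv_X_succ]
    exact (Polynomial.aeval_algHom_apply
      (AlgHom.restrictScalars A (Polynomial.CAlgHom (R := MvPolynomial (Fin 1) A)))
      (X (0 : Fin 1)) q₂)
  have hdegb₂ : (F b₂).natDegree < d := by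
    rw [hF, MvPolynomial.natDegree_finSuccEquiv]; exact hdeg
  have hb₁ : b₁ = 0 := by
    by_contra hne
    have hFb₁ : F b₁ ≠ 0 := fun h => hne (by simpa using F.injective (by simpa using h))
    have hsum' : F b₁ * F (Polynomial.aeval (X (0 : Fin 2)) q₁)
        + F b₂ * F (Polynomial.aeval (X (1 : Fin 2)) q₂) = 0 := by
      rw [← map_mul, ← map_mul, ← map_add, hsum, map_zero]
    have key : F b₁ * F (Polynomial.aeval (X (0 : Fin 2)) q₁)
        = -(F b₂ * F (Polynomial.aeval (X (1 : Fin 2)) q₂)) :=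
      eq_neg_of_add_eq_zero_left hsum'
    have hL : (F b₁ * F (Polynomial.aeval (X (0 : Fin 2)) q₁)).natDegree
        = (F b₁).natDegree + d := by
      rw [mul_comm, hmon₁.natDegree_mul' hFb₁, hdeg₁, add_comm]
    have hR : (-(F b₂ * F (Polynomial.aeval (X (1 : Fin 2)) q₂))).natDegree < d := by
      rw [Polynomial.natDegree_neg, hFp₂]
      calc (F b₂ * Polynomial.C (Polynomial.aeval (X (0 : Fin 1)) q₂)).natDegree
          ≤ (F b₂).natDegree + (Polynomial.C (Polynomial.aeval (X (0 : Fin 1)) q₂)).natDegree :=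
            Polynomial.natDegree_mul_le
        _ ≤ (F b₂).natDegree + 0 := by simp
        _ < d := by simpa using hdegb₂
    rw [key, hL] at *
    omega
  refine ⟨hb₁, ?_⟩
  have hmul : b₂ * Polynomial.aeval (X (1 : Fin 2)) q₂ = 0 := by
    rw [hb₁] at hsum; simpa using hsum
  set G := (MvPolynomial.renameEquiv A (Equiv.swap (0 : Fin 2) 1)).trans
      (MvPolynomial.finSuccEquiv A 1) with hG
  have hGX : G (X (1 : Fin 2)) = Polynomial.X := by
    simp [hG, Equiv.swap_apply_right, MvPolynomial.finSuccEquiv_X_zero]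
  have hGp₂ : G (Polynomial.aeval (X (1 : Fin 2)) q₂)
      = q₂.map (algebraMap A (MvPolynomial (Fin 1) A)) := by
    rw [← Polynomial.aeval_algHom_apply G (X (1 : Fin 2)) q₂, hGX]
    rfl
  have hmonG : (G (Polynomial.aeval (X (1 : Fin 2)) q₂)).Monic := by
    rw [hGp₂]; exact hq₂.map _
  have h0 : G b₂ * G (Polynomial.aeval (X (1 : Fin 2)) q₂)
      = 0 * G (Polynomial.aeval (X (1 : Fin 2)) q₂) := by
    rw [zero_mul, ← map_mul, hmul, map_zero]
  have := hmonG.isRegular.right h0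
  exact (map_eq_zero_iff G G.injective).mp this
end

section
/- Let D ≥ 1 and let p ∈ ℤ[x₁,x₂,t₂,t₃] be a polynomial not involving the variable x₂ which is monic of degree D as a polynomial in x₁, and let p′ be the image of p under the ring automorphism of ℤ[x₁,x₂,t₂,t₃] exchanging x₁ and x₂ and fixing t₂ and t₃. Suppose θ₃, θ₄ ∈ ℤ[x₁,x₂,t₂,t₃] both have total degree strictly less than D and every coefficient of the polynomial (θ₃ + x₁·θ₄)·p + (θ₃ + x₂·θ₄)·p′ is an even integer. Then every coefficient of θ₃ and every coefficient of θ₄ is an even integer. -/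
open MvPolynomial

/-- The inclusion `ℤ[t₂,t₃] → ℤ[x₁,x₂,t₂,t₃]`; in `ℤ[x₁,x₂,t₂,t₃] = MvPolynomial (Fin 4) ℤ`
the variables are `x₁ = X 0`, `x₂ = X 1`, `t₂ = X 2`, `t₃ = X 3`. -/
noncomputable def coeffEmb : MvPolynomial (Fin 2) ℤ →+* MvPolynomial (Fin 4) ℤ :=
  (rename (fun i : Fin 2 => i.succ.succ) :
    MvPolynomial (Fin 2) ℤ →ₐ[ℤ] MvPolynomial (Fin 4) ℤ).toRingHom

noncomputable def pi4 : MvPolynomial (Fin 4) ℤ →+* MvPolynomial (Fin 4) (ZMod 2) :=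
  MvPolynomial.map (Int.castRingHom (ZMod 2))

noncomputable def gbar : MvPolynomial (Fin 2) ℤ →+* MvPolynomial (Fin 3) (ZMod 2) :=
  ((rename (Fin.succ : Fin 2 → Fin 3) :
    MvPolynomial (Fin 2) (ZMod 2) →ₐ[ZMod 2] MvPolynomial (Fin 3) (ZMod 2)).toRingHom).comp
    (MvPolynomial.map (Int.castRingHom (ZMod 2)))

noncomputable def F4 : MvPolynomial (Fin 4) (ZMod 2) →+* Polynomial (MvPolynomial (Fin 3) (ZMod 2)) :=
  (MvPolynomial.finSuccEquiv (ZMod 2) 3 : MvPolynomial (Fin 4) (ZMod 2) →+* _)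

noncomputable def F2 : MvPolynomial (Fin 3) (ZMod 2) →+* Polynomial (MvPolynomial (Fin 2) (ZMod 2)) :=
  (MvPolynomial.finSuccEquiv (ZMod 2) 2 : MvPolynomial (Fin 3) (ZMod 2) →+* _)

lemma hcomp4 : F4.comp (pi4.comp coeffEmb) = Polynomial.C.comp gbar := by
  apply MvPolynomial.ringHom_ext
  · intro r
    simp [F4, pi4, gbar, coeffEmb, finSuccEquiv_apply]
  · intro i
    simp [F4, pi4, gbar, coeffEmb]
    rw [show ((i.succ.succ : Fin 4)) = (Fin.succ (i.succ)) from rfl, finSuccEquiv_X_succ]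

lemma hcomp2 : F2.comp gbar =
    Polynomial.C.comp (MvPolynomial.map (Int.castRingHom (ZMod 2))) := by
  apply MvPolynomial.ringHom_ext
  · intro r
    simp [F2, gbar, finSuccEquiv_apply]
  · intro i
    simp [F2, gbar]
    rw [finSuccEquiv_X_succ]

lemma totalDegree_pi4_le (f : MvPolynomial (Fin 4) ℤ) :
    (pi4 f).totalDegree ≤ f.totalDegree :=
  Finset.sup_mono (MvPolynomial.support_map_subset _ _)

/-- Let `D ≥ 1` and `p ∈ ℤ[x₁,x₂,t₂,t₃]` be a polynomial not involving `x₂` which is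
monic of degree `D` in `x₁` (i.e. the image of a monic polynomial `q` of degree `D` with
coefficients in `ℤ[t₂,t₃]`, evaluated at `x₁`), and let `p′` be the image of `p` under the
automorphism exchanging `x₁, x₂` and fixing `t₂, t₃`.  If `θ₃, θ₄` both have total degree
`< D` and every coefficient of `(θ₃ + x₁·θ₄)·p + (θ₃ + x₂·θ₄)·p′` is even, then every
coefficient of `θ₃` and of `θ₄` is even. -/
theorem stmt_4 (D : ℕ) (hD : 1 ≤ D)
    (q : Polynomial (MvPolynomial (Fin 2) ℤ)) (hq : q.Monic) (hqD : q.natDegree = D)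
    (p p' : MvPolynomial (Fin 4) ℤ)
    (hp : p = Polynomial.eval₂ coeffEmb (X 0) q)
    (hp' : p' = rename (Equiv.swap (0 : Fin 4) 1) p)
    (θ₃ θ₄ : MvPolynomial (Fin 4) ℤ)
    (h₃ : θ₃.totalDegree < D) (h₄ : θ₄.totalDegree < D)
    (heven : ∀ m, Even (coeff m ((θ₃ + X 0 * θ₄) * p + (θ₃ + X 1 * θ₄) * p'))) :
    (∀ m, Even (coeff m θ₃)) ∧ (∀ m, Even (coeff m θ₄)) := by
  -- reduce mod 2
  have htot : pi4 ((θ₃ + X 0 * θ₄) * p + (θ₃ + X 1 * θ₄) * p') = 0 := by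
    apply MvPolynomial.ext
    intro m
    rw [pi4, MvPolynomial.coeff_map, coeff_zero]
    obtain ⟨r, hr⟩ := heven m
    have hdvd : (2 : ℤ) ∣ coeff m ((θ₃ + X 0 * θ₄) * p + (θ₃ + X 1 * θ₄) * p') :=
      ⟨r, by omega⟩
    exact_mod_cast (ZMod.intCast_zmod_eq_zero_iff_dvd _ 2).mpr hdvd
  set A := pi4 θ₃ with hA
  set B := pi4 θ₄ with hB
  -- image of p
  have hpim : pi4 p = Polynomial.eval₂ (pi4.comp coeffEmb) (X 0) q := by
    rw [hp, Polynomial.hom_eval₂]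
    congr 1
    simp [pi4]
  -- image of p'
  have hp'im : pi4 p' = Polynomial.eval₂ (pi4.comp coeffEmb) (X 1) q := by
    have hren : (rename (Equiv.swap (0 : Fin 4) 1) (p : MvPolynomial (Fin 4) ℤ))
        = Polynomial.eval₂ coeffEmb (X 1) q := by
      rw [hp, show (rename (Equiv.swap (0 : Fin 4) 1) : MvPolynomial (Fin 4) ℤ → _) =
        ((rename (Equiv.swap (0 : Fin 4) 1) :
          MvPolynomial (Fin 4) ℤ →ₐ[ℤ] MvPolynomial (Fin 4) ℤ).toRingHom : _ →+* _) from rfl,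
        Polynomial.hom_eval₂]
      congr 1
      · apply MvPolynomial.ringHom_ext
        · intro r; simp [coeffEmb]
        · intro i
          simp [coeffEmb]
          exact Equiv.swap_apply_of_ne_of_ne (Fin.succ_ne_zero _)
            (fun h => Fin.succ_ne_zero i (Fin.succ_injective _ h))
      · simp
    rw [hp', hren, Polynomial.hom_eval₂]
    congr 1
    simp [pi4]
  -- apply F4 to everything
  have hFp : F4 (pi4 p) = q.map gbar := by
    rw [hpim, Polynomial.hom_eval₂, hcomp4]
    have : F4 (X 0) = Polynomial.X := finSuccEquiv_X_zero
    rw [this]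
    rfl
  set Q' : MvPolynomial (Fin 3) (ZMod 2) := Polynomial.eval₂ gbar (X 0) q with hQ'def
  have hFp' : F4 (pi4 p') = Polynomial.C Q' := by
    rw [hp'im, Polynomial.hom_eval₂, hcomp4]
    have h1 : F4 (X 1) = Polynomial.C (X 0) := by
      rw [show ((1 : Fin 4)) = Fin.succ 0 from rfl]
      exact finSuccEquiv_X_succ
    rw [h1, hQ'def, Polynomial.hom_eval₂]
  have hQ'ne : Q' ≠ 0 := by
    intro h
    have : F2 Q' = 0 := by rw [h, map_zero]
    rw [hQ'def, Polynomial.hom_eval₂, hcomp2] at this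
    have hFX : F2 (X 0) = Polynomial.X := finSuccEquiv_X_zero
    rw [hFX] at this
    have hmap : Polynomial.eval₂
        (Polynomial.C.comp (MvPolynomial.map (Int.castRingHom (ZMod 2)))) Polynomial.X q
        = q.map (MvPolynomial.map (Int.castRingHom (ZMod 2))) := rfl
    rw [hmap] at this
    exact (hq.map (MvPolynomial.map (Int.castRingHom (ZMod 2)))).ne_zero this
  -- apply F4 to the main identity
  set a := F4 A with ha
  set b := F4 B with hb
  have heq : (a + Polynomial.X * b) * (q.map gbar)
      + (a + Polynomial.C (X 0) * b) * Polynomial.C Q' = 0 := by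
    have := congrArg F4 htot
    rw [map_add, map_mul, map_mul, map_add, map_add, map_mul, map_mul] at this
    rw [show pi4 ((θ₃ + X 0 * θ₄) * p + (θ₃ + X 1 * θ₄) * p')
      = (A + pi4 (X 0) * B) * pi4 p + (A + pi4 (X 1) * B) * pi4 p' from by
        rw [hA, hB]; push_cast [map_add, map_mul]; ring] at htot
    have h0 : pi4 (X (0 : Fin 4)) = X 0 := by simp [pi4]
    have h1 : pi4 (X (1 : Fin 4)) = X 1 := by simp [pi4]
    rw [h0, h1] at htot
    have := congrArg F4 htot
    rw [map_add, map_mul, map_mul, map_add, map_add, map_mul, map_mul, hFp, hFp',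
      map_zero] at this
    have hX0 : F4 (X (0 : Fin 4)) = Polynomial.X := finSuccEquiv_X_zero
    have hX1 : F4 (X (1 : Fin 4)) = Polynomial.C (X 0) := by
      rw [show ((1 : Fin 4)) = Fin.succ 0 from rfl]; exact finSuccEquiv_X_succ
    rw [hX0, hX1] at this
    exact this
  -- degree bounds
  have hna : a.natDegree < D := by
    rw [ha, show (F4 A).natDegree = (finSuccEquiv (ZMod 2) 3 A).natDegree from rfl,
      natDegree_finSuccEquiv]
    exact lt_of_le_of_lt (le_trans (degreeOf_le_totalDegree A 0) (totalDegree_pi4_le θ₃)) h₃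
  have hnb : b.natDegree < D := by
    rw [hb, show (F4 B).natDegree = (finSuccEquiv (ZMod 2) 3 B).natDegree from rfl,
      natDegree_finSuccEquiv]
    exact lt_of_le_of_lt (le_trans (degreeOf_le_totalDegree B 0) (totalDegree_pi4_le θ₄)) h₄
  have hPqMonic : (q.map gbar).Monic := hq.map _
  have hPqD : (q.map gbar).natDegree = D := by rw [hq.natDegree_map]; exact hqD
  have hCb : (Polynomial.C (X (0 : Fin 3) : MvPolynomial (Fin 3) (ZMod 2)) * b).natDegree < D := by
    refine lt_of_le_of_lt Polynomial.natDegree_mul_le ?_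
    rw [Polynomial.natDegree_C, zero_add]
    exact hnb
  have haCb : (a + Polynomial.C (X 0) * b).natDegree < D :=
    lt_of_le_of_lt (Polynomial.natDegree_add_le _ _) (max_lt hna hCb)
  have hRbound : ((a + Polynomial.C (X 0) * b) * Polynomial.C Q').natDegree < D := by
    refine lt_of_le_of_lt Polynomial.natDegree_mul_le ?_
    rw [Polynomial.natDegree_C, add_zero]
    exact haCb
  -- key vanishing
  have key : a + Polynomial.X * b = 0 := by
    by_contra h
    have hL : ((a + Polynomial.X * b) * (q.map gbar)).natDegree
        = (a + Polynomial.X * b).natDegree + D := by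
      rw [Polynomial.natDegree_mul h hPqMonic.ne_zero, hPqD]
    have hEq2 : (a + Polynomial.X * b) * (q.map gbar)
        = -((a + Polynomial.C (X 0) * b) * Polynomial.C Q') := by
      linear_combination heq
    have : (a + Polynomial.X * b).natDegree + D < D := by
      rw [← hL, hEq2, Polynomial.natDegree_neg]
      exact hRbound
    omega
  have key2 : a + Polynomial.C (X 0) * b = 0 := by
    rw [key, zero_mul, zero_add] at heq
    rcases mul_eq_zero.mp heq with h | h
    · exact h
    · exact absurd (by simpa using h) hQ'ne
  have hbz : b = 0 := by
    have hfac : (Polynomial.X - Polynomial.C (X 0)) * b = 0 := by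
      linear_combination key - key2
    rcases mul_eq_zero.mp hfac with h | h
    · exfalso
      have := congrArg (fun r => Polynomial.coeff r 1) h
      simp [Polynomial.coeff_X_one, Polynomial.coeff_C] at this
    · exact h
  have haz : a = 0 := by
    have := key
    rw [hbz, mul_zero, add_zero] at this
    exact this
  -- pull back
  have hAz : A = 0 := by
    apply (finSuccEquiv (ZMod 2) 3).injective
    rw [map_zero]
    exact haz
  have hBz : B = 0 := by
    apply (finSuccEquiv (ZMod 2) 3).injective
    rw [map_zero]
    exact hbz
  constructor
  · intro m
    have : coeff m A = 0 := by rw [hAz, coeff_zero]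
    rw [hA, pi4, MvPolynomial.coeff_map] at this
    obtain ⟨r, hr⟩ := (ZMod.intCast_zmod_eq_zero_iff_dvd _ 2).mp (by exact_mod_cast this)
    exact ⟨r, by omega⟩
  · intro m
    have : coeff m B = 0 := by rw [hBz, coeff_zero]
    rw [hB, pi4, MvPolynomial.coeff_map] at this
    obtain ⟨r, hr⟩ := (ZMod.intCast_zmod_eq_zero_iff_dvd _ 2).mp (by exact_mod_cast this)
    exact ⟨r, by omega⟩
end

section
/- Let R = ℤ[β₁,β₂,γ,c₂,c₃]/(2γ, γ(β₁+γ), 2c₃) and S = ℤ[x₁,x₂,c₂,c₃]/(2c₃). Let φ : R → S be the ring homomorphism determined by β₁ ↦ x₁+x₂, β₂ ↦ x₁·x₂, γ ↦ 0, c₂ ↦ c₂ and c₃ ↦ c₃ (this assignment sends each of the relations 2γ, γ(β₁+γ), 2c₃ to zero in S, so φ is well defined). Then the kernel of φ is exactly the ideal of R generated by the class of γ. -/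
open MvPolynomial

/-- The ideal `(2γ, γ(β₁+γ), 2c₃)` of `ℤ[β₁,β₂,γ,c₂,c₃] = MvPolynomial (Fin 5) ℤ`,
where `β₁ = X 0`, `β₂ = X 1`, `γ = X 2`, `c₂ = X 3`, `c₃ = X 4`. -/
noncomputable def Irel : Ideal (MvPolynomial (Fin 5) ℤ) :=
  Ideal.span {2 * X 2, X 2 * (X 0 + X 2), 2 * X 4}

/-- The ideal `(2c₃)` of `ℤ[x₁,x₂,c₂,c₃] = MvPolynomial (Fin 4) ℤ`,
where `x₁ = X 0`, `x₂ = X 1`, `c₂ = X 2`, `c₃ = X 3`. -/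
noncomputable def Jrel : Ideal (MvPolynomial (Fin 4) ℤ) :=
  Ideal.span {2 * X 3}

/-!
On polynomials, `φ` is induced by `ψ = σ ∘ π`, where `π = gammaZero` sets `γ = 0` (its kernel is
`(γ)`) and `σ = esymmSubst ℤ : β₁ ↦ x₁ + x₂, β₂ ↦ x₁x₂` is injective over every coefficient ring
by the fundamental theorem of symmetric polynomials. The heart of the matter is
`σ⁻¹(2c₃) = (2c₃)`. If `σ r ∈ (2c₃)`, then `r ≡ 0 mod 2`, since `σ` commutes with reduction
mod `2` and is injective over `𝔽₂`; writing `r = 2r'` and cancelling `2` gives `σ r' ∈ (c₃)`,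
and as `σ` commutes with `c₃ ↦ 0` and is injective, `c₃ ∣ r'`. Hence `ψ⁻¹(2c₃) = (γ, 2c₃)`,
whose image in `R` is `(γ)`.
-/

section

variable {A A' B B' : Type*} [CommRing A] [CommRing A'] [CommRing B] [CommRing B']
  {F F' G H : Type*} [FunLike F A B] [RingHomClass F A B] [FunLike F' A' B']
  [RingHomClass F' A' B'] [FunLike G A A'] [RingHomClass G A A'] [FunLike H B B']
  [RingHomClass H B B']

theorem comap_ker_le_ker_of_comm {f : F} {f' : F'} {g : G} {h : H}
    (hcomm : ∀ x, h (f x) = f' (g x)) (hf' : Function.Injective f') :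
    (RingHom.ker h).comap f ≤ RingHom.ker g := by
  intro r hr
  rw [Ideal.mem_comap, RingHom.mem_ker, hcomm] at hr
  exact (injective_iff_map_eq_zero f').mp hf' _ hr

theorem comap_span_singleton_mul_le (f : F) {a b : A} (ha : f a ∈ nonZeroDivisors B)
    (hA : (Ideal.span {f a}).comap f ≤ Ideal.span {a})
    (hB : (Ideal.span {f b}).comap f ≤ Ideal.span {b}) :
    (Ideal.span {f (a * b)}).comap f ≤ Ideal.span {a * b} := by
  intro r hr
  obtain ⟨q, hq⟩ := Ideal.mem_span_singleton.mp (Ideal.mem_comap.mp hr)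
  rw [map_mul, mul_assoc] at hq
  obtain ⟨r', rfl⟩ := Ideal.mem_span_singleton.mp <| hA <| Ideal.mem_span_singleton.mpr ⟨_, hq⟩
  have hr' : f r' = f b * q := by
    rw [map_mul] at hq
    rw [← sub_eq_zero]
    exact mem_nonZeroDivisors_iff_left.mp ha _ (by rw [mul_sub, hq, sub_self])
  obtain ⟨t, rfl⟩ := Ideal.mem_span_singleton.mp <| hB <| Ideal.mem_span_singleton.mpr ⟨_, hr'⟩
  exact Ideal.mem_span_singleton.mpr ⟨t, by ring⟩

end

namespace MvPolynomial

variable {σ R : Type*} [CommRing R]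

theorem aeval_sub_mem_of_forall_sub_mem {I : Ideal (MvPolynomial σ R)}
    {f : σ → MvPolynomial σ R} (hf : ∀ i, f i - X i ∈ I) (p : MvPolynomial σ R) :
    aeval f p - p ∈ I := by
  have h : (Ideal.Quotient.mkₐ R I).comp (aeval f) = Ideal.Quotient.mkₐ R I :=
    algHom_ext fun i => by simpa [Ideal.Quotient.eq] using hf i
  exact Ideal.Quotient.eq.mp (DFunLike.congr_fun h p)

theorem ker_aeval_update_X_zero [DecidableEq σ] (i : σ) :
    RingHom.ker (aeval (Function.update X i 0) : MvPolynomial σ R →ₐ[R] MvPolynomial σ R) =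
      Ideal.span {X i} := by
  apply le_antisymm
  · intro p hp
    have hsub := aeval_sub_mem_of_forall_sub_mem (I := Ideal.span {X i})
      (f := Function.update X i 0) (fun j => by
        rcases eq_or_ne j i with rfl | hj
        · simp
        · simp [Function.update_of_ne hj]) p
    rwa [RingHom.mem_ker.mp hp, zero_sub, neg_mem_iff] at hsub
  · rw [Ideal.span_le, Set.singleton_subset_iff]
    simp

theorem ker_map_intCastRingHom (n : ℕ) :
    RingHom.ker (map (Int.castRingHom (ZMod n)) : MvPolynomial σ ℤ →+* _) =
      Ideal.span {(n : MvPolynomial σ ℤ)} := by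
  rw [ker_map, ZMod.ker_intCastRingHom, Ideal.map_span, Set.image_singleton, map_natCast]

end MvPolynomial

noncomputable def esymmSubst (k : Type*) [CommRing k] :
    MvPolynomial (Fin 4) k →ₐ[k] MvPolynomial (Fin 4) k :=
  aeval ![X 0 + X 1, X 0 * X 1, X 2, X 3]

theorem esymm_fin_two_two (R : Type*) [CommRing R] : esymm (Fin 2) R 2 = X 0 * X 1 := by
  rw [esymm, show Finset.powersetCard 2 (Finset.univ : Finset (Fin 2)) = {Finset.univ} by decide]
  simp [Fin.prod_univ_two]

theorem esymmSubst_injective (k : Type*) [CommRing k] : Function.Injective (esymmSubst k) := by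
  -- with `c₂, c₃` moved into the coefficients, `esymmSubst` is `esymmAlgHom` in two variables
  let e : MvPolynomial (Fin 4) k ≃ₐ[k] MvPolynomial (Fin 2) (MvPolynomial (Fin 2) k) :=
    (renameEquiv k finSumFinEquiv.symm).trans (sumAlgEquiv k (Fin 2) (Fin 2))
  let F : MvPolynomial (Fin 2) (MvPolynomial (Fin 2) k) →ₐ[k] _ :=
    (aeval fun i : Fin 2 => esymm (Fin 2) (MvPolynomial (Fin 2) k) (i + 1)).restrictScalars k
  have hF : Function.Injective F := fun p q hpq =>
    esymmAlgHom_fin_injective _ le_rfl <| Subtype.ext <| by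
      rw [esymmAlgHom_apply, esymmAlgHom_apply]; exact hpq
  have hsplit : ∀ i : Fin (2 + 2), finSumFinEquiv.symm i =
      ![Sum.inl 0, Sum.inl 1, Sum.inr 0, Sum.inr 1] i := by decide
  have hconj : (e : _ →ₐ[k] _).comp (esymmSubst k) = F.comp e := by
    apply algHom_ext
    intro i
    fin_cases i <;> simp [e, F, esymmSubst, hsplit, esymm_fin_two_two, esymm_one,
      Fin.sum_univ_two, sumAlgEquiv_X_inl, sumAlgEquiv_X_inr, algebraMap_eq]
  have h : ∀ x, F (e x) = e (esymmSubst k x) := fun x => (DFunLike.congr_fun hconj x).symm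
  intro p q hpq
  exact e.injective (hF (by rw [h, h, hpq]))

theorem map_esymmSubst {k k' : Type*} [CommRing k] [CommRing k'] (f : k →+* k')
    (p : MvPolynomial (Fin 4) k) : map f (esymmSubst k p) = esymmSubst k' (map f p) := by
  have h : (map f).comp (esymmSubst k).toRingHom = (esymmSubst k').toRingHom.comp (map f) := by
    apply ringHom_ext
    · simp [esymmSubst, algebraMap_eq]
    · intro i
      fin_cases i <;> simp [esymmSubst]
  exact DFunLike.congr_fun h p

theorem aeval_update_X_zero_esymmSubst {k : Type*} [CommRing k] (p : MvPolynomial (Fin 4) k) :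
    aeval (Function.update X 3 0) (esymmSubst k p) =
      esymmSubst k (aeval (Function.update X 3 0) p) := by
  have h : (aeval (Function.update X 3 0)).comp (esymmSubst k) =
      (esymmSubst k).comp (aeval (Function.update X 3 0)) := by
    apply algHom_ext
    intro i
    fin_cases i <;> simp [esymmSubst]
  exact DFunLike.congr_fun h p

theorem comap_esymmSubst_Jrel : Jrel.comap (esymmSubst ℤ) = Jrel := by
  have hσ2 : esymmSubst ℤ 2 = 2 := map_ofNat _ 2
  have hσX3 : esymmSubst ℤ (X 3) = X 3 := by simp [esymmSubst]
  apply le_antisymm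
  · have hJ : Jrel = Ideal.span {esymmSubst ℤ (2 * X 3)} := by rw [map_mul, hσ2, hσX3, Jrel]
    refine (Ideal.comap_mono hJ.le).trans <| comap_span_singleton_mul_le (esymmSubst ℤ)
      (by rw [hσ2]; exact mem_nonZeroDivisors_of_ne_zero two_ne_zero) ?_ ?_
    · have h2 := ker_map_intCastRingHom (σ := Fin 4) 2
      rw [Nat.cast_ofNat] at h2
      rw [hσ2, ← h2]
      exact comap_ker_le_ker_of_comm (map_esymmSubst _) (esymmSubst_injective _)
    · rw [hσX3, ← ker_aeval_update_X_zero]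
      exact comap_ker_le_ker_of_comm aeval_update_X_zero_esymmSubst (esymmSubst_injective _)
  · rw [Jrel, Ideal.span_le, Set.singleton_subset_iff, SetLike.mem_coe, Ideal.mem_comap,
      map_mul, hσ2, hσX3]
    exact Ideal.mem_span_singleton_self _

noncomputable def gammaZero : MvPolynomial (Fin 5) ℤ →ₐ[ℤ] MvPolynomial (Fin 4) ℤ :=
  aeval ![X 0, X 1, 0, X 2, X 3]

theorem gammaZero_rename (p : MvPolynomial (Fin 4) ℤ) :
    gammaZero (rename ![0, 1, 3, 4] p) = p := by
  have h : gammaZero.comp (rename ![0, 1, 3, 4]) = AlgHom.id ℤ _ := by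
    apply algHom_ext
    intro i
    fin_cases i <;> simp [gammaZero]
  exact DFunLike.congr_fun h p

theorem rename_gammaZero (p : MvPolynomial (Fin 5) ℤ) :
    rename ![0, 1, 3, 4] (gammaZero p) = aeval (Function.update X 2 0) p := by
  have h : (rename ![0, 1, 3, 4]).comp gammaZero = aeval (Function.update X 2 0) := by
    apply algHom_ext
    intro i
    fin_cases i <;> simp [gammaZero]
  exact DFunLike.congr_fun h p

theorem ker_gammaZero : RingHom.ker gammaZero = Ideal.span {X 2} := by
  apply le_antisymm
  · intro p hp
    rw [← ker_aeval_update_X_zero, RingHom.mem_ker, ← rename_gammaZero, RingHom.mem_ker.mp hp,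
      map_zero]
  · rw [Ideal.span_le, Set.singleton_subset_iff]
    simp [gammaZero]

theorem comap_gammaZero_Jrel : Jrel.comap gammaZero = Ideal.span {X 2, 2 * X 4} := by
  have hJ : Jrel = Ideal.map gammaZero (Ideal.span {2 * X 4}) := by
    rw [Ideal.map_span, Set.image_singleton, Jrel]
    simp [gammaZero, map_ofNat]
  have hsurj : Function.Surjective gammaZero := fun p => ⟨_, gammaZero_rename p⟩
  rw [hJ, Ideal.comap_map_of_surjective _ hsurj, ← RingHom.ker_eq_comap_bot, ker_gammaZero,
    Ideal.span_insert, sup_comm]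

theorem comap_esymmSubst_comp_gammaZero_Jrel :
    Jrel.comap ((esymmSubst ℤ).comp gammaZero) = Ideal.span {X 2, 2 * X 4} := by
  change (Jrel.comap (esymmSubst ℤ)).comap gammaZero = _
  rw [comap_esymmSubst_Jrel, comap_gammaZero_Jrel]

/-- Let `R = ℤ[β₁,β₂,γ,c₂,c₃]/(2γ, γ(β₁+γ), 2c₃)` and `S = ℤ[x₁,x₂,c₂,c₃]/(2c₃)`, and
let `φ : R → S` be the ring homomorphism determined by `β₁ ↦ x₁+x₂`, `β₂ ↦ x₁x₂`,
`γ ↦ 0`, `c₂ ↦ c₂`, `c₃ ↦ c₃`.  Then `ker φ` is exactly the ideal generated by the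
class of `γ`. -/
theorem stmt_5
    (φ : (MvPolynomial (Fin 5) ℤ ⧸ Irel) →+* (MvPolynomial (Fin 4) ℤ ⧸ Jrel))
    (hβ₁ : φ (Ideal.Quotient.mk Irel (X 0)) = Ideal.Quotient.mk Jrel (X 0 + X 1))
    (hβ₂ : φ (Ideal.Quotient.mk Irel (X 1)) = Ideal.Quotient.mk Jrel (X 0 * X 1))
    (hγ : φ (Ideal.Quotient.mk Irel (X 2)) = 0)
    (hc₂ : φ (Ideal.Quotient.mk Irel (X 3)) = Ideal.Quotient.mk Jrel (X 2))
    (hc₃ : φ (Ideal.Quotient.mk Irel (X 4)) = Ideal.Quotient.mk Jrel (X 3)) :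
    RingHom.ker φ = Ideal.span {Ideal.Quotient.mk Irel (X 2)} := by
  have hφ : φ.comp (Ideal.Quotient.mk Irel) =
      (Ideal.Quotient.mk Jrel).comp ((esymmSubst ℤ).comp gammaZero).toRingHom := by
    apply ringHom_ext
    · intro r; simp
    · intro i
      fin_cases i <;> simp [esymmSubst, gammaZero, hβ₁, hβ₂, hγ, hc₂, hc₃]
  have hker : RingHom.ker (φ.comp (Ideal.Quotient.mk Irel)) = Ideal.span {X 2, 2 * X 4} := by
    rw [hφ, ← RingHom.comap_ker, Ideal.mk_ker, ← comap_esymmSubst_comp_gammaZero_Jrel]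
    rfl
  have h24 : Ideal.Quotient.mk Irel (2 * X 4) = 0 :=
    Ideal.Quotient.eq_zero_iff_mem.mpr (Ideal.subset_span (by simp))
  rw [← Ideal.map_comap_of_surjective _ Ideal.Quotient.mk_surjective (RingHom.ker φ),
    RingHom.comap_ker, hker, Ideal.map_span, Set.image_pair, h24, Set.pair_comm,
    Ideal.span_insert_zero]
end
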